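/- If D is a coindependent set in a matroid M and H is a hyperplane of M\D, then cl_M(H) is a hyperplane of M with cl_M(H) − D = H and r_M(cl_M(H)) = r_{M\D}(H). -/

import Mathlib

open Set

namespace Matroid

variable {α β : Type*}

/-- The rank of a set in a matroid, valued in `ℕ∞`. -/
noncomputable def eRk' (M : Matroid α) (X : Set α) : ℕ∞ :=
  ⨆ I ∈ {I | M.Indep I ∧ I ⊆ X}, I.encard

/-- A hyperplane is a flat of rank `r(M) - 1`. -/
def Hyperplane' (M : Matroid α) (H : Set α) : Prop :=
  M.IsFlat H ∧ M.eRk' H + 1 = M.eRk' M.E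

/-- A point is a rank-one flat. -/
def Point' (M : Matroid α) (P : Set α) : Prop :=
  M.IsFlat P ∧ M.eRk' P = 1

/-- A matroid is simple if every subset of the ground set with at most two elements
is independent (no loops and no parallel pairs). -/
def Simple' (M : Matroid α) : Prop :=
  ∀ X ⊆ M.E, X.encard ≤ 2 → M.Indep X

/-- Deletion of a set from a matroid. -/
def delete' (M : Matroid α) (D : Set α) : Matroid α := M ↾ (M.E \ D)

/-- Contraction of a set in a matroid, defined by duality. -/
def contract' (M : Matroid α) (C : Set α) : Matroid α := (M✶.delete' C)✶

/-- `φ` is an adjoint map from `M` to `M'` : `M'` is simple of the same rank as `M`,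
`φ` maps flats of `M` to flats of `M'` injectively, reversing inclusion, and restricts
to a bijection from the hyperplanes of `M` onto the points of `M'`. -/
def IsAdjointMap (M : Matroid α) (M' : Matroid β) (φ : Set α → Set β) : Prop :=
  M'.Simple' ∧ M'.eRk' M'.E = M.eRk' M.E ∧
  (∀ F, M.IsFlat F → M'.IsFlat (φ F)) ∧
  (∀ ⦃F₁ F₂⦄, M.IsFlat F₁ → M.IsFlat F₂ → φ F₁ = φ F₂ → F₁ = F₂) ∧
  (∀ ⦃F₁ F₂⦄, M.IsFlat F₁ → M.IsFlat F₂ → F₁ ⊆ F₂ → φ F₂ ⊆ φ F₁) ∧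
  (∀ H, M.Hyperplane' H → M'.Point' (φ H)) ∧
  (∀ P, M'.Point' P → ∃ H, M.Hyperplane' H ∧ φ H = P)

/-- `IsMinor N M` means `N` is obtained from `M` by a sequence of deletions and
contractions. -/
inductive IsMinor' : Matroid α → Matroid α → Prop
  | refl (M : Matroid α) : IsMinor' M M
  | delete {M N : Matroid α} (h : IsMinor' N M) (D : Set α) : IsMinor' (N.delete' D) M
  | contract {M N : Matroid α} (h : IsMinor' N M) (C : Set α) : IsMinor' (N.contract' C) M

/-- `M` has an adjoint. -/
def HasAdjoint (M : Matroid α) : Prop :=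
  ∃ (M' : Matroid (Set α)) (φ : Set α → Set (Set α)), IsAdjointMap M M' φ

lemma le_eRk'_of_indep {M : Matroid α} {I X : Set α} (hI : M.Indep I) (hIX : I ⊆ X) :
    I.encard ≤ M.eRk' X :=
  le_iSup₂ (f := fun (I : Set α) (_ : I ∈ {I | M.Indep I ∧ I ⊆ X}) => I.encard) I ⟨hI, hIX⟩

lemma eRk'_eq_encard_of_basis' {M : Matroid α} {I X : Set α} (hI : M.IsBasis' I X) :
    M.eRk' X = I.encard := by
  apply le_antisymm
  · refine iSup₂_le fun J hJ => ?_
    by_contra hlt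
    push_neg at hlt
    obtain ⟨e, he, hins⟩ := hI.indep.augment hJ.1 hlt
    exact hI.insert_not_indep ⟨hJ.2 he.1, he.2⟩ hins
  · exact le_eRk'_of_indep hI.indep hI.subset

lemma eRk'_mono {M : Matroid α} {X Y : Set α} (hXY : X ⊆ Y) : M.eRk' X ≤ M.eRk' Y :=
  iSup₂_le fun J hJ => le_eRk'_of_indep hJ.1 (hJ.2.trans hXY)

lemma flat_closure' (M : Matroid α) (X : Set α) : M.IsFlat (M.closure X) :=
  ⟨fun I Y hI hIY => (M.subset_closure Y hIY.subset_ground).trans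
      (by rw [← hIY.closure_eq_closure, hI.closure_eq_closure, closure_closure]),
    M.closure_subset_ground X⟩

lemma eRk'_closure_eq {M : Matroid α} (X : Set α) : M.eRk' (M.closure X) = M.eRk' X := by
  obtain ⟨I, hI⟩ := M.exists_isBasis' X
  rw [eRk'_eq_encard_of_basis' hI, eRk'_eq_encard_of_basis' hI.isBasis_closure_right.isBasis']

lemma eRk'_restrict {M : Matroid α} {R H : Set α} (hHR : H ⊆ R) :
    (M ↾ R).eRk' H = M.eRk' H := by
  apply le_antisymm <;> refine iSup₂_le fun J hJ => ?_
  · exact le_eRk'_of_indep hJ.1.of_restrict hJ.2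
  · exact le_eRk'_of_indep (hJ.1.indep_restrict_of_subset (hJ.2.trans hHR)) hJ.2

lemma eRk'_spanning_eq {M : Matroid α} {S : Set α} (hS : M.Spanning S) :
    M.eRk' S = M.eRk' M.E := by
  obtain ⟨B, hB, hBS⟩ := hS.exists_isBase_subset
  refine le_antisymm (eRk'_mono hS.subset_ground) ?_
  rw [eRk'_eq_encard_of_basis' hB.isBasis_ground.isBasis']
  exact le_eRk'_of_indep hB.indep hBS

/-- If `D` is coindependent in `M` and `H` is a hyperplane of `M ＼ D`, then `cl_M H` is a
hyperplane of `M` with `cl_M H \ D = H` and `r_M (cl_M H) = r_{M ＼ D} H`. -/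
theorem stmt9 (M : Matroid α) (D : Set α) (hD : M.Coindep D) (H : Set α)
    (hH : (M.delete' D).Hyperplane' H) :
    M.Hyperplane' (M.closure H) ∧ M.closure H \ D = H ∧
      M.eRk' (M.closure H) = (M.delete' D).eRk' H := by
  set N := M.delete' D with hN
  have hNdef : N = M ↾ (M.E \ D) := rfl
  have hNE : N.E = M.E \ D := rfl
  have hHE : H ⊆ M.E \ D := hNE ▸ hH.1.subset_ground
  have hHEg : H ⊆ M.E := hHE.trans diff_subset
  obtain ⟨J, hJN⟩ := N.exists_isBasis H (hNE ▸ hHE)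
  have hJM : M.IsBasis J H := by
    have := (isBasis_restrict_iff' (M := M) (R := M.E \ D)).mp (hNdef ▸ hJN)
    rw [inter_eq_self_of_subset_left hHEg] at this
    exact this.1
  have hrk : M.eRk' (M.closure H) = N.eRk' H := by
    rw [eRk'_closure_eq, hNdef, eRk'_restrict hHE]
  have hrkE : N.eRk' N.E = M.eRk' M.E := by
    rw [hNE, hNdef, eRk'_restrict (le_refl _), eRk'_spanning_eq hD.compl_spanning]
  refine ⟨⟨M.flat_closure' H, ?_⟩, ?_, hrk⟩
  · rw [hrk, ← hrkE]; exact hH.2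
  · apply subset_antisymm
    · rintro x ⟨hxcl, hxD⟩
      have hxE : x ∈ M.E := mem_ground_of_mem_closure hxcl
      by_cases hxH : x ∈ H
      · exact hxH
      have hxJ : x ∉ J := fun h => hxH (hJN.subset h)
      have hdep : M.Dep (insert x J) := by
        rw [← hJM.indep.mem_closure_iff_of_notMem hxJ, hJM.closure_eq_closure]
        exact hxcl
      have hnind : ¬ N.Indep (insert x J) := fun h =>
        hdep.not_indep (hNdef ▸ h).of_restrict
      have hxclN : x ∈ N.closure J :=
        hJN.indep.mem_closure_iff'.mpr ⟨hNE ▸ ⟨hxE, hxD⟩, fun h => absurd h hnind⟩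
      have : x ∈ N.closure H := N.closure_subset_closure hJN.subset hxclN
      rwa [hH.1.closure] at this
    · exact fun x hx => ⟨M.subset_closure H hHEg hx, (hHE hx).2⟩
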